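/- arXiv:1901.03069 — 4 statements merged into one kernel-verified Lean document; each statement's English description precedes it below -/
import Mathlib

section
/- Let A ∈ ℝ^{n×n}, a ∈ ℝ, 0 ≤ θ ≤ π/2, α = sin θ, β = cos θ. Suppose A = (J−R)Q with J skew-symmetric, R symmetric, Q symmetric positive definite, and the 2n×2n block matrix [[α(R + aQ⁻¹), −βJ], [βJ, α(R + aQ⁻¹)]] is positive definite. Then every eigenvalue λ = λ₁ + iλ₂ of A satisfies α(λ₁ − a) < β·λ₂ < −α(λ₁ − a), i.e., λ ∈ Ω_C(a,θ). -/
/-!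
Put `w = Q v` for an eigenpair `(λ, v)` of `A`, so that `(J - R) w = λ Q⁻¹ w`, and take the
Hermitian form `w* · w` of both sides. Since `J` is skew and `R`, `Q⁻¹` are symmetric, with
`p = w* Q⁻¹ w > 0` this gives `w* R w = -λ₁ p` and `w* J w = i λ₂ p`. Evaluating the positive
definite block matrix at `(Re w, Im w)` and at `(Re w, -Im w)` gives
`|β Im (w* J w)| < α Re (w* (R + a Q⁻¹) w)`, that is `|β λ₂| p < -α (λ₁ - a) p`.
-/

open Matrix Complex Real

namespace Matrix

variable {ι : Type*}

lemma sumElim_re_im_ne_zero {w : ι → ℂ} (hw : w ≠ 0) : Sum.elim (re ∘ w) (im ∘ w) ≠ 0 := by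
  obtain ⟨i, hi⟩ := Function.ne_iff.mp hw
  intro h
  exact hi (Complex.ext (congrFun h (Sum.inl i)) (congrFun h (Sum.inr i)))

variable [Fintype ι]

lemma map_ofReal_mul (M N : Matrix ι ι ℝ) :
    (M * N).map ofReal = M.map ofReal * N.map ofReal :=
  Matrix.map_mul (f := ofRealHom)

noncomputable def complexQuadForm (w : ι → ℂ) : Matrix ι ι ℝ →ₗ[ℝ] ℂ where
  toFun M := star w ⬝ᵥ (M.map ofReal *ᵥ w)
  map_add' M N := by
    rw [← dotProduct_add, ← add_mulVec, ← Matrix.map_add _ (fun _ _ => ofReal_add _ _)]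
  map_smul' c M := by
    simp only [RingHom.id_apply, ← dotProduct_smul, ← smul_mulVec]
    congr 2
    ext i j
    simp [Complex.real_smul]

variable (M : Matrix ι ι ℝ) (w : ι → ℂ)

lemma re_complexQuadForm :
    (complexQuadForm w M).re
      = (re ∘ w) ⬝ᵥ (M *ᵥ (re ∘ w)) + (im ∘ w) ⬝ᵥ (M *ᵥ (im ∘ w)) := by
  simp only [complexQuadForm, LinearMap.coe_mk, AddHom.coe_mk, dotProduct, mulVec,
    Matrix.map_apply, Pi.star_apply, Function.comp_apply, Finset.mul_sum, re_sum,
    ← Finset.sum_add_distrib]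
  refine Finset.sum_congr rfl fun i _ => Finset.sum_congr rfl fun k _ => ?_
  simp [mul_re, mul_im]

lemma im_complexQuadForm :
    (complexQuadForm w M).im
      = (re ∘ w) ⬝ᵥ (M *ᵥ (im ∘ w)) - (im ∘ w) ⬝ᵥ (M *ᵥ (re ∘ w)) := by
  simp only [complexQuadForm, LinearMap.coe_mk, AddHom.coe_mk, dotProduct, mulVec,
    Matrix.map_apply, Pi.star_apply, Function.comp_apply, Finset.mul_sum, im_sum,
    ← Finset.sum_sub_distrib]
  refine Finset.sum_congr rfl fun i _ => Finset.sum_congr rfl fun k _ => ?_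
  simp [mul_re, mul_im]
  ring

lemma complexQuadForm_star : complexQuadForm (star w) M = star (complexQuadForm w M) := by
  have hre : re ∘ star w = re ∘ w := funext fun i => conj_re (w i)
  have him : im ∘ star w = -(im ∘ w) := funext fun i => conj_im (w i)
  apply Complex.ext
  · simp only [re_complexQuadForm, hre, him, star_def, conj_re, mulVec_neg, dotProduct_neg,
      neg_dotProduct, neg_neg]
  · simp only [im_complexQuadForm, hre, him, star_def, conj_im, mulVec_neg, dotProduct_neg,
      neg_dotProduct]
    ring

variable {M}

lemma im_complexQuadForm_of_transpose_eq (hM : Mᵀ = M) : (complexQuadForm w M).im = 0 := by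
  rw [im_complexQuadForm, dotProduct_mulVec, ← mulVec_transpose, hM, dotProduct_comm, sub_self]

lemma re_complexQuadForm_of_transpose_eq_neg (hM : Mᵀ = -M) :
    (complexQuadForm w M).re = 0 := by
  have skew (x : ι → ℝ) : x ⬝ᵥ (M *ᵥ x) = 0 := by
    have h : x ⬝ᵥ (M *ᵥ x) = x ⬝ᵥ (Mᵀ *ᵥ x) := by
      rw [dotProduct_mulVec, ← mulVec_transpose, dotProduct_comm]
    rw [hM, neg_mulVec, dotProduct_neg] at h
    linarith
  rw [re_complexQuadForm, skew, skew, add_zero]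

lemma PosDef.re_complexQuadForm_pos (hM : M.PosDef) {w : ι → ℂ} (hw : w ≠ 0) :
    0 < (complexQuadForm w M).re := by
  have nonneg (x : ι → ℝ) : 0 ≤ x ⬝ᵥ (M *ᵥ x) := by
    simpa using hM.posSemidef.dotProduct_mulVec_nonneg x
  have pos {x : ι → ℝ} (hx : x ≠ 0) : 0 < x ⬝ᵥ (M *ᵥ x) := by
    simpa using hM.dotProduct_mulVec_pos hx
  rw [re_complexQuadForm]
  by_cases hre : re ∘ w = 0
  · have him : im ∘ w ≠ 0 := fun him =>
      sumElim_re_im_ne_zero hw (by rw [hre, him]; exact Sum.elim_zero_zero)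
    linarith [nonneg (re ∘ w), pos him]
  · linarith [pos hre, nonneg (im ∘ w)]

lemma sumElim_dotProduct_fromBlocks_mulVec (S K : Matrix ι ι ℝ) (w : ι → ℂ) :
    Sum.elim (re ∘ w) (im ∘ w) ⬝ᵥ (fromBlocks S (-K) K S *ᵥ Sum.elim (re ∘ w) (im ∘ w))
      = (complexQuadForm w S).re - (complexQuadForm w K).im := by
  rw [re_complexQuadForm, im_complexQuadForm, fromBlocks_mulVec, sumElim_dotProduct_sumElim]
  simp only [Sum.elim_comp_inl, Sum.elim_comp_inr, neg_mulVec, dotProduct_add, dotProduct_neg]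
  ring

/-- Positive definiteness of `[[S, -K], [K, S]]` is that of the Hermitian matrix `S + i K`. -/
lemma PosDef.abs_im_complexQuadForm_lt {S K : Matrix ι ι ℝ} (h : (fromBlocks S (-K) K S).PosDef)
    {w : ι → ℂ} (hw : w ≠ 0) : |(complexQuadForm w K).im| < (complexQuadForm w S).re := by
  have pos {u : ι → ℂ} (hu : u ≠ 0) : (complexQuadForm u K).im < (complexQuadForm u S).re := by
    have := h.dotProduct_mulVec_pos (sumElim_re_im_ne_zero hu)
    rw [star_trivial, sumElim_dotProduct_fromBlocks_mulVec] at this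
    linarith
  have hconj := pos (star_ne_zero.mpr hw)
  rw [complexQuadForm_star, complexQuadForm_star, star_def, conj_re, conj_im] at hconj
  exact abs_lt.mpr ⟨by linarith, pos hw⟩

lemma inv_map_mulVec_map_mulVec {Q : Matrix ι ι ℝ} [DecidableEq ι] (hQ : IsUnit Q.det)
    (v : ι → ℂ) : Q⁻¹.map ofReal *ᵥ (Q.map ofReal *ᵥ v) = v := by
  rw [mulVec_mulVec, ← map_ofReal_mul, nonsing_inv_mul Q hQ]
  simp

lemma complexQuadForm_eq_mul_of_mulVec_eq_smul [DecidableEq ι] {B Q : Matrix ι ι ℝ}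
    (hQ : IsUnit Q.det) {lam : ℂ} {v : ι → ℂ} (heig : (B * Q).map ofReal *ᵥ v = lam • v) :
    complexQuadForm (Q.map ofReal *ᵥ v) B
      = lam * complexQuadForm (Q.map ofReal *ᵥ v) Q⁻¹ := by
  have hBw : B.map ofReal *ᵥ (Q.map ofReal *ᵥ v) = lam • v := by
    rwa [mulVec_mulVec, ← map_ofReal_mul]
  simp only [complexQuadForm, LinearMap.coe_mk, AddHom.coe_mk, hBw,
    inv_map_mulVec_map_mulVec hQ, dotProduct_smul, smul_eq_mul]

end Matrix

theorem stmt_3_general {n : ℕ} (A J R Q : Matrix (Fin n) (Fin n) ℝ) (a : ℝ) (α β : ℝ)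
    (hJ : Jᵀ = -J) (hR : Rᵀ = R) (hQ : Q.PosDef) (hA : A = (J - R) * Q)
    (hblk : (Matrix.fromBlocks (α • (R + a • Q⁻¹)) (-(β • J)) (β • J) (α • (R + a • Q⁻¹))).PosDef) :
    ∀ (lam : ℂ) (v : Fin n → ℂ), v ≠ 0 → (A.map (Complex.ofReal)) *ᵥ v = lam • v →
      α * (lam.re - a) < β * lam.im ∧ β * lam.im < -(α * (lam.re - a)) := by
  intro lam v hv heig
  have hQdet : IsUnit Q.det := hQ.det_pos.ne'.isUnit
  set w := Q.map ofReal *ᵥ v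
  have hw : w ≠ 0 := by
    rintro h
    apply hv
    rw [← inv_map_mulVec_map_mulVec hQdet v]
    change _ *ᵥ w = 0
    rw [h, mulVec_zero]
  have hQinv : (Q⁻¹)ᵀ = Q⁻¹ := by
    rw [transpose_nonsing_inv, ← conjTranspose_eq_transpose_of_trivial, hQ.isHermitian.eq]
  have key : complexQuadForm w J - complexQuadForm w R = lam * complexQuadForm w Q⁻¹ := by
    rw [← map_sub]
    exact complexQuadForm_eq_mul_of_mulVec_eq_smul hQdet (hA ▸ heig)
  have hre := congrArg Complex.re key
  have him := congrArg Complex.im key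
  have hp := hQ.inv.re_complexQuadForm_pos hw
  have hblk' := hblk.abs_im_complexQuadForm_lt hw
  simp only [sub_re, sub_im, mul_re, mul_im, map_smul, map_add, add_re, smul_re, smul_im,
    smul_eq_mul, re_complexQuadForm_of_transpose_eq_neg w hJ,
    im_complexQuadForm_of_transpose_eq w hR, im_complexQuadForm_of_transpose_eq w hQinv] at hre him hblk'
  have hr : (complexQuadForm w R).re = -(lam.re * (complexQuadForm w Q⁻¹).re) := by linarith
  have hj : (complexQuadForm w J).im = lam.im * (complexQuadForm w Q⁻¹).re := by linarith
  rw [hr, hj, abs_lt] at hblk'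
  constructor
  · exact lt_of_mul_lt_mul_right (by linarith [hblk'.1]) hp.le
  · exact lt_of_mul_lt_mul_right (by linarith [hblk'.2]) hp.le

theorem stmt_3 {n : ℕ} (A J R Q : Matrix (Fin n) (Fin n) ℝ) (a θ : ℝ)
    (hθ₁ : 0 ≤ θ) (hθ₂ : θ ≤ π / 2) (α β : ℝ) (hα : α = Real.sin θ) (hβ : β = Real.cos θ)
    (hJ : Jᵀ = -J) (hR : Rᵀ = R) (hQ : Q.PosDef) (hA : A = (J - R) * Q)
    (hblk : (Matrix.fromBlocks (α • (R + a • Q⁻¹)) (-(β • J)) (β • J) (α • (R + a • Q⁻¹))).PosDef) :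
    ∀ (lam : ℂ) (v : Fin n → ℂ), v ≠ 0 → (A.map (Complex.ofReal)) *ᵥ v = lam • v →
      α * (lam.re - a) < β * lam.im ∧ β * lam.im < -(α * (lam.re - a)) :=
  stmt_3_general A J R Q a α β hJ hR hQ hA hblk
end

section
/- Let A ∈ ℝ^{n×n}, q ∈ ℝ, r > 0. Suppose A = (J−R)Q with J skew-symmetric, R symmetric, Q symmetric positive definite, and the 2n×2n block matrix [[rQ⁻¹, −qQ⁻¹ − (J−R)], [−qQ⁻¹ − (J−R)ᵀ, rQ⁻¹]] is positive definite. Then every eigenvalue λ of A satisfies |λ + q| < r. -/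
/-! If `(J - R) Q v = λ v` with `v ≠ 0`, put `u = Q v`; then `Q⁻¹ u = v`, `(J - R) u = λ v` and
`c = v* Q v > 0`. Evaluating the (complexified) block form at `(u, β u)` with `|β| = 1` gives
`2 c (r - Re (β (λ + q))) > 0`, and rotating `λ + q` onto the positive real axis by the choice of
`β` yields `|λ + q| < r`. -/

open Matrix Complex

open scoped ComplexOrder

theorem Complex.norm_lt_of_forall_re_mul_lt {w : ℂ} {s : ℝ}
    (h : ∀ β : ℂ, ‖β‖ = 1 → (β * w).re < s) : ‖w‖ < s := by
  have hrot : exp (-(arg w * I)) * w = ‖w‖ := by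
    calc exp (-(arg w * I)) * w = exp (-(arg w * I)) * (‖w‖ * exp (arg w * I)) := by
          rw [norm_mul_exp_arg_mul_I]
      _ = ‖w‖ := by rw [mul_left_comm, ← exp_add, neg_add_cancel, exp_zero, mul_one]
  simpa [hrot] using h (exp (-(arg w * I))) (by simp [norm_exp])

namespace Matrix

variable {m : Type*} [Fintype m]

theorem re_star_dotProduct_map_ofReal_mulVec (M : Matrix m m ℝ) (x : m → ℂ) :
    (star x ⬝ᵥ M.map ofReal *ᵥ x).re
      = (fun i ↦ (x i).re) ⬝ᵥ M *ᵥ (fun i ↦ (x i).re)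
        + (fun i ↦ (x i).im) ⬝ᵥ M *ᵥ (fun i ↦ (x i).im) := by
  simp only [dotProduct, mulVec, Pi.star_apply, map_apply, re_sum, Finset.mul_sum,
    ← Finset.sum_add_distrib]
  refine Finset.sum_congr rfl fun i _ ↦ Finset.sum_congr rfl fun j _ ↦ ?_
  simp only [mul_re, mul_im, star_def, conj_re, conj_im, ofReal_re, ofReal_im]
  ring

theorem PosDef.map_ofReal {M : Matrix m m ℝ} (hM : M.PosDef) : (M.map ofReal).PosDef := by
  have hH : (M.map ofReal).IsHermitian := hM.isHermitian.map _ fun _ ↦ (conj_ofReal _).symm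
  refine .of_dotProduct_mulVec_pos hH fun x hx ↦ ?_
  refine pos_iff.mpr ⟨?_, (hH.im_star_dotProduct_mulVec_self x).symm⟩
  rw [re_star_dotProduct_map_ofReal_mulVec]
  have hre := hM.posSemidef.dotProduct_mulVec_nonneg
  by_cases ha : (fun i ↦ (x i).re) = 0
  · have hb : (fun i ↦ (x i).im) ≠ 0 := fun hb ↦ hx <| funext fun i ↦
      Complex.ext (congrFun ha i) (congrFun hb i)
    simpa using add_pos_of_nonneg_of_pos (hre _) (hM.dotProduct_mulVec_pos hb)
  · simpa using add_pos_of_pos_of_nonneg (hM.dotProduct_mulVec_pos ha) (hre _)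

section Blocks

variable {R : Type*} [NonUnitalNonAssocSemiring R] [Star R] {n : Type*} [Fintype n]

theorem star_sumElim_dotProduct_fromBlocks_mulVec_sumElim (A : Matrix m m R) (B : Matrix m n R)
    (C : Matrix n m R) (D : Matrix n n R) (u : m → R) (w : n → R) :
    star (Sum.elim u w) ⬝ᵥ fromBlocks A B C D *ᵥ Sum.elim u w
      = star u ⬝ᵥ A *ᵥ u + star u ⬝ᵥ B *ᵥ w + star w ⬝ᵥ C *ᵥ u + star w ⬝ᵥ D *ᵥ w := by
  rw [fromBlocks_mulVec, Function.star_sumElim, sumElim_dotProduct_sumElim]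
  simp only [Sum.elim_comp_inl, Sum.elim_comp_inr, dotProduct_add, add_assoc]

end Blocks

theorem PosDef.neg_two_mul_re_lt_of_fromBlocks {A B D : Matrix m m ℂ}
    (h : (fromBlocks A B Bᴴ D).PosDef) {u : m → ℂ} (hu : u ≠ 0) {β : ℂ} (hβ : ‖β‖ = 1) :
    -2 * (β * (star u ⬝ᵥ B *ᵥ u)).re < (star u ⬝ᵥ A *ᵥ u).re + (star u ⬝ᵥ D *ᵥ u).re := by
  have hx : Sum.elim u (β • u) ≠ 0 := fun hx ↦ hu <| funext fun i ↦ congrFun hx (.inl i)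
  have hββ : β * star β = 1 := by
    rw [star_def, mul_conj, normSq_eq_norm_sq, hβ, one_pow, ofReal_one]
  have hB : star u ⬝ᵥ B *ᵥ (β • u) = β * (star u ⬝ᵥ B *ᵥ u) := by
    rw [mulVec_smul, dotProduct_smul, smul_eq_mul]
  have hBH : star (β • u) ⬝ᵥ Bᴴ *ᵥ u = star (β * (star u ⬝ᵥ B *ᵥ u)) := by
    rw [star_smul, smul_dotProduct, star_dotProduct, star_mulVec, conjTranspose_conjTranspose,
      ← dotProduct_mulVec, smul_eq_mul, star_mul']
  have hD : star (β • u) ⬝ᵥ D *ᵥ (β • u) = star u ⬝ᵥ D *ᵥ u := by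
    rw [mulVec_smul, dotProduct_smul, star_smul, smul_dotProduct, smul_smul, hββ, one_smul]
  have hpos := (pos_iff.mp (h.dotProduct_mulVec_pos hx)).1
  rw [star_sumElim_dotProduct_fromBlocks_mulVec_sumElim, hB, hBH, hD] at hpos
  simp only [add_re, star_def, conj_re] at hpos
  linarith

theorem norm_add_lt_of_posDef_fromBlocks [DecidableEq m] {P Q S : Matrix m m ℂ} {q r : ℝ}
    (hPQ : P * Q = 1) (hQ : Q.PosDef)
    (h : (fromBlocks ((r : ℂ) • P) (-((q : ℂ) • P) - S) (-((q : ℂ) • P) - S)ᴴ ((r : ℂ) • P)).PosDef)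
    {lam : ℂ} {v : m → ℂ} (hv : v ≠ 0) (hSQ : (S * Q) *ᵥ v = lam • v) : ‖lam + q‖ < r := by
  set u := Q *ᵥ v
  have hPu : P *ᵥ u = v := by rw [mulVec_mulVec, hPQ, one_mulVec]
  have hu : u ≠ 0 := fun hu ↦ hv (by rw [← hPu, hu, mulVec_zero])
  set c := star v ⬝ᵥ Q *ᵥ v
  obtain ⟨hc_re, hc_im⟩ := pos_iff.mp (hQ.dotProduct_mulVec_pos hv)
  have huv : star u ⬝ᵥ v = c := by rw [star_mulVec, ← dotProduct_mulVec, hQ.isHermitian.eq]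
  have hdiag : star u ⬝ᵥ ((r : ℂ) • P) *ᵥ u = r * c := by
    rw [smul_mulVec, hPu, dotProduct_smul, huv, smul_eq_mul]
  have hoff : star u ⬝ᵥ (-((q : ℂ) • P) - S) *ᵥ u = -((lam + q) * c) := by
    rw [sub_mulVec, neg_mulVec, smul_mulVec, hPu, mulVec_mulVec, hSQ, dotProduct_sub,
      dotProduct_neg, dotProduct_smul, dotProduct_smul, huv, smul_eq_mul, smul_eq_mul]
    ring
  refine norm_lt_of_forall_re_mul_lt fun β hβ ↦ ?_
  have key := h.neg_two_mul_re_lt_of_fromBlocks hu hβ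
  rw [hdiag, hoff, show c = (c.re : ℂ) from Complex.ext rfl hc_im.symm, mul_neg, neg_re,
    ← mul_assoc, re_mul_ofReal, ← ofReal_mul, ofReal_re] at key
  nlinarith

end Matrix

theorem stmt_7_general {n : ℕ} (A J R Q : Matrix (Fin n) (Fin n) ℝ) (q r : ℝ)
    (hQ : Q.PosDef) (hA : A = (J - R) * Q)
    (hblk : (Matrix.fromBlocks (r • Q⁻¹) (-(q • Q⁻¹) - (J - R))
              (-(q • Q⁻¹) - (J - R)ᵀ) (r • Q⁻¹)).PosDef) :
    ∀ (lam : ℂ) (v : Fin n → ℂ), v ≠ 0 → (A.map (Complex.ofReal)) *ᵥ v = lam • v →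
      ‖lam + q‖ < r := by
  intro lam v hv hAv
  have hmap (X Y : Matrix (Fin n) (Fin n) ℝ) : (X * Y).map ofReal = X.map ofReal * Y.map ofReal :=
    Matrix.map_mul (f := ofRealHom)
  refine norm_add_lt_of_posDef_fromBlocks (P := Q⁻¹.map ofReal) (S := (J - R).map ofReal) ?_
    hQ.map_ofReal ?_ hv (by rw [← hmap, ← hA, hAv])
  · rw [← hmap, nonsing_inv_mul _ ((isUnit_iff_isUnit_det Q).mp hQ.isUnit),
      Matrix.map_one _ ofReal_zero ofReal_one]
  · have hQinv (i j : Fin n) : Q⁻¹ j i = Q⁻¹ i j := hQ.inv.isHermitian.apply i j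
    convert hblk.map_ofReal using 1
    rw [fromBlocks_map]
    congr 2 <;> ext <;> simp [hQinv]

theorem stmt_7 {n : ℕ} (A J R Q : Matrix (Fin n) (Fin n) ℝ) (q r : ℝ) (hr : 0 < r)
    (hJ : Jᵀ = -J) (hR : Rᵀ = R) (hQ : Q.PosDef) (hA : A = (J - R) * Q)
    (hblk : (Matrix.fromBlocks (r • Q⁻¹) (-(q • Q⁻¹) - (J - R))
              (-(q • Q⁻¹) - (J - R)ᵀ) (r • Q⁻¹)).PosDef) :
    ∀ (lam : ℂ) (v : Fin n → ℂ), v ≠ 0 → (A.map (Complex.ofReal)) *ᵥ v = lam • v →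
      ‖lam + q‖ < r :=
  stmt_7_general A J R Q q r hQ hA hblk
end

section
/- Let A ∈ ℝ^{n×n}, q ≥ r > 0, and X a real symmetric positive definite matrix such that the block matrix [[−rX, qX + AX], [qX + XAᵀ, −rX]] is negative definite. Then the matrix R = −(AX + XAᵀ)/2 is positive semidefinite (in fact positive definite). -/
/-!
Compressing the negative definite block matrix with the column `[I; I]` (testing it on vectors
`(x, x)`) shows that `2 (r - q) X - (A X + X Aᵀ)` is negative definite; adding the positive
semidefinite `2 (q - r) X` then shows that `A X + X Aᵀ` is negative definite.
-/

open Matrix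

namespace Matrix

variable {n R : Type*} [Fintype n] [DecidableEq n] [Ring R] [PartialOrder R] [StarRing R]

theorem PosDef.add_add_add_of_fromBlocks {A B C D : Matrix n n R}
    (h : (fromBlocks A B C D).PosDef) : (A + B + C + D).PosDef := by
  have hinj : Function.Injective (fromRows (1 : Matrix n n R) (1 : Matrix n n R)).mulVec :=
    fun x y hxy => by simpa [fromRows_mulVec] using congrArg (· ∘ Sum.inl) hxy
  convert h.conjTranspose_mul_mul_same hinj using 1
  rw [conjTranspose_fromRows_eq_fromCols_conjTranspose, Matrix.mul_assoc,
    fromBlocks_mul_fromRows, fromCols_mul_fromRows]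
  simp only [conjTranspose_one, one_mul, mul_one]
  abel

end Matrix

theorem stmt_8_general {n : ℕ} (A X : Matrix (Fin n) (Fin n) ℝ) (q r : ℝ)
    (hq : q ≥ r) (hX : X.PosDef)
    (hblk : (-(Matrix.fromBlocks (-(r • X)) (q • X + A * X)
                (q • X + X * Aᵀ) (-(r • X)))).PosDef) :
    ((-(1 / 2 : ℝ)) • (A * X + X * Aᵀ)).PosSemidef ∧
      ((-(1 / 2 : ℝ)) • (A * X + X * Aᵀ)).PosDef := by
  rw [fromBlocks_neg] at hblk
  have hcompressed := hblk.add_add_add_of_fromBlocks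
  have hshift : ((2 * (q - r)) • X).PosSemidef := hX.posSemidef.smul (by linarith)
  have hR : (-(1 / 2 : ℝ)) • (A * X + X * Aᵀ) = (1 / 2 : ℝ) •
      (-(-(r • X)) + -(q • X + A * X) + -(q • X + X * Aᵀ) + -(-(r • X)) + (2 * (q - r)) • X) := by
    module
  have hpd : ((-(1 / 2 : ℝ)) • (A * X + X * Aᵀ)).PosDef :=
    hR ▸ (hcompressed.add_posSemidef hshift).smul (by norm_num)
  exact ⟨hpd.posSemidef, hpd⟩

theorem stmt_8 {n : ℕ} (A X : Matrix (Fin n) (Fin n) ℝ) (q r : ℝ)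
    (hq : q ≥ r) (hr : 0 < r) (hX : X.PosDef)
    (hblk : (-(Matrix.fromBlocks (-(r • X)) (q • X + A * X)
                (q • X + X * Aᵀ) (-(r • X)))).PosDef) :
    ((-(1 / 2 : ℝ)) • (A * X + X * Aᵀ)).PosSemidef ∧
      ((-(1 / 2 : ℝ)) • (A * X + X * Aᵀ)).PosDef :=
  stmt_8_general A X q r hq hX hblk
end

section
/- Let q ∈ ℝ, r > 0, B ∈ ℝ^{n×n}, and P ≻ 0 a real symmetric positive definite matrix. Suppose the 2n×2n symmetric matrix [[rP, −qP − B], [−qP − Bᵀ, rP]] is positive definite. Then for every nonzero v ∈ ℂⁿ, the 2×2 Hermitian matrix [[r·v*Pv, −q·v*Pv − v*Bv], [−q·v*Pv − (v*Bv)*, r·v*Pv]] is positive definite, and hence |q + (v*Bv)/(v*Pv)| < r. -/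
/-!
Complexify the real block matrix, which stays positive definite, and compress it to the span of
`(v, 0)` and `(0, v)`: the resulting `2 × 2` matrix of quadratic forms is the one in the
statement, hence positive definite. With `c = v* P v > 0` and `w = -(q c + v* B v)`, its
determinant `r² c² - |w|²` is positive, so `|q + v* B v / c| = |w| / c < r`.
-/

open ComplexOrder Matrix Complex

open scoped MatrixOrder in
lemma Matrix.PosDef.map_ofReal_s19 {m : Type*} [Fintype m] [DecidableEq m] {M : Matrix m m ℝ}
    (hM : M.PosDef) : (M.map ofReal).PosDef := by
  have hPSD : (M.map ofReal).PosSemidef := by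
    obtain ⟨y, rfl⟩ := CStarAlgebra.nonneg_iff_eq_star_mul_self.mp hM.posSemidef.nonneg
    have h := (y.map ofReal).posSemidef_conjTranspose_mul_self
    rw [← conjTranspose_map _ (fun x => (conj_ofReal x).symm)] at h
    convert h using 1
    exact Matrix.map_mul (f := ofRealHom)
  have hdet : (M.map ofReal).det = M.det := (RingHom.map_det ofRealHom M).symm
  rw [hPSD.posDef_iff_det_ne_zero, hdet]
  exact_mod_cast hM.det_pos.ne'

lemma Matrix.star_dotProduct_conjTranspose_mulVec {R m : Type*} [Fintype m] [CommSemiring R]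
    [StarRing R] (A : Matrix m m R) (v : m → R) :
    star v ⬝ᵥ Aᴴ *ᵥ v = star (star v ⬝ᵥ A *ᵥ v) := by
  rw [star_dotProduct, star_mulVec, conjTranspose_conjTranspose, dotProduct_mulVec]

lemma Matrix.PosDef.compress_fromBlocks {R m : Type*} [CommRing R] [PartialOrder R] [StarRing R]
    [NoZeroDivisors R] [Fintype m] {A B C D : Matrix m m R} (h : (fromBlocks A B C D).PosDef)
    {v : m → R} (hv : v ≠ 0) :
    !![star v ⬝ᵥ A *ᵥ v, star v ⬝ᵥ B *ᵥ v; star v ⬝ᵥ C *ᵥ v, star v ⬝ᵥ D *ᵥ v].PosDef := by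
  let x : Fin 2 → m ⊕ m → R := ![Sum.elim v 0, Sum.elim 0 v]
  have hx : Function.Injective (of x)ᵀ.mulVec := by
    refine (injective_iff_map_eq_zero (mulVecLin (of x)ᵀ)).mpr fun u hu => ?_
    obtain ⟨k, hk⟩ : ∃ k, v k ≠ 0 := Function.ne_iff.mp hv
    have h0 : u 0 = 0 := by simpa [x, hk, vecHead] using congrFun hu (Sum.inl k)
    have h1 : u 1 = 0 := by simpa [x, hk, vecHead, vecTail] using congrFun hu (Sum.inr k)
    ext i
    fin_cases i
    exacts [h0, h1]
  have hcompress : ((of x)ᵀ)ᴴ * fromBlocks A B C D * (of x)ᵀ =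
      !![star v ⬝ᵥ A *ᵥ v, star v ⬝ᵥ B *ᵥ v; star v ⬝ᵥ C *ᵥ v, star v ⬝ᵥ D *ᵥ v] := by
    ext i j
    change (star (x i) ᵥ* fromBlocks A B C D) ⬝ᵥ x j = _
    rw [← dotProduct_mulVec]
    fin_cases i <;> fin_cases j <;>
      simp [x, fromBlocks_mulVec, Function.star_sumElim, sumElim_dotProduct_sumElim]
  exact hcompress ▸ h.conjTranspose_mul_mul_same hx

lemma Matrix.norm_lt_of_posDef_fin_two {𝕜 : Type*} [RCLike 𝕜] {a w w' : 𝕜}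
    (h : !![a, w; w', a].PosDef) : ‖w‖ < ‖a‖ := by
  have hw' : w' = star w := by simpa using (h.1.apply 1 0).symm
  obtain ⟨x, hx, rfl⟩ := RCLike.pos_iff_exists_ofReal.mp (h.diag_pos (i := 0))
  have hdet : 0 < x * x - ‖w‖ ^ 2 := by
    have := h.det_pos
    rwa [det_fin_two_of, hw', RCLike.star_def, RCLike.mul_conj, ← RCLike.ofReal_mul,
      ← RCLike.ofReal_pow, ← RCLike.ofReal_sub, RCLike.ofReal_pos] at this
  rw [RCLike.norm_ofReal, abs_of_pos hx]
  nlinarith [norm_nonneg w]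

theorem stmt_19 {n : ℕ} (B P : Matrix (Fin n) (Fin n) ℝ) (q r : ℝ) (hr : 0 < r)
    (hP : P.PosDef)
    (hblk : (Matrix.fromBlocks (r • P) (-(q • P) - B)
              (-(q • P) - Bᵀ) (r • P)).PosDef) :
    ∀ (v : Fin n → ℂ), v ≠ 0 →
      (!![(r : ℂ) * (star v ⬝ᵥ (P.map (Complex.ofReal) *ᵥ v)),
          -(q : ℂ) * (star v ⬝ᵥ (P.map (Complex.ofReal) *ᵥ v)) - star v ⬝ᵥ (B.map (Complex.ofReal) *ᵥ v);
          -(q : ℂ) * (star v ⬝ᵥ (P.map (Complex.ofReal) *ᵥ v)) - star (star v ⬝ᵥ (B.map (Complex.ofReal) *ᵥ v)),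
          (r : ℂ) * (star v ⬝ᵥ (P.map (Complex.ofReal) *ᵥ v))]).PosDef ∧
      ‖(q : ℂ) + (star v ⬝ᵥ (B.map (Complex.ofReal) *ᵥ v)) /
        (star v ⬝ᵥ (P.map (Complex.ofReal) *ᵥ v))‖ < r := by
  intro v hv
  set c := star v ⬝ᵥ (P.map ofReal *ᵥ v)
  set s := star v ⬝ᵥ (B.map ofReal *ᵥ v)
  have hblkℂ : (fromBlocks ((r : ℂ) • P.map ofReal) (-((q : ℂ) • P.map ofReal) - B.map ofReal)
      (-((q : ℂ) • P.map ofReal) - (B.map ofReal)ᴴ) ((r : ℂ) • P.map ofReal)).PosDef := by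
    convert hblk.map_ofReal_s19 using 1
    rw [fromBlocks_map]
    congr 1 <;> ext <;> simp
  have hN : !![(r : ℂ) * c, -(q : ℂ) * c - s; -(q : ℂ) * c - star s, (r : ℂ) * c].PosDef := by
    simpa [star_dotProduct_conjTranspose_mulVec, sub_mulVec, neg_mulVec, smul_mulVec]
      using hblkℂ.compress_fromBlocks hv
  refine ⟨hN, ?_⟩
  have hc : c ≠ 0 := (hP.map_ofReal_s19.dotProduct_mulVec_pos hv).ne'
  calc ‖(q : ℂ) + s / c‖ = ‖-(q : ℂ) * c - s‖ / ‖c‖ := by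
        rw [← norm_div, ← norm_neg]; congr 1; field_simp; ring
    _ < ‖(r : ℂ) * c‖ / ‖c‖ := by gcongr; exact norm_lt_of_posDef_fin_two hN
    _ = r := by
        rw [norm_mul, norm_real, Real.norm_of_nonneg hr.le,
          mul_div_cancel_right₀ _ (norm_ne_zero_iff.mpr hc)]
end
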